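/- arXiv:1802.08675 — 2 statements merged into one kernel-verified Lean document; each statement's English description precedes it below -/
import Mathlib

section
/- For 0 < κ < 1 and a > 0, the Laplace transform φ̂(λ) of φ(r) = κ a^κ / (a+r)^{κ+1} satisfies φ̂(λ) = 1 - Γ(1-κ) a^κ λ^κ + o(λ^κ) as λ → 0⁺ (equivalently, (1 - φ̂(λ))/ (aλ)^κ → Γ(1-κ)). -/
/-!
The tail `ψ r = a ^ κ * (a + r) ^ (-κ)` satisfies `ψ' = -φ` and `ψ 0 = 1`, so integrating by parts
against `exp (-(λ r))` gives `1 - φ̂ λ = λ ∫ exp (-(λ r)) ψ r`. The substitution `u = λ r` turns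
this into `(a λ) ^ κ ∫ exp (-u) (a λ + u) ^ (-κ)`, and as `a λ → 0⁺` the last integral tends to
`∫ exp (-u) u ^ (-κ) = Γ(1 - κ)` by dominated convergence, the dominating function being
integrable because `κ < 1`.
-/

open Real MeasureTheory Set Filter Topology

theorem integral_exp_neg_mul_mul_deriv {ψ ψ' : ℝ → ℝ} {s C : ℝ} (hs : 0 < s)
    (hψ0 : ContinuousWithinAt ψ (Ici 0) 0) (hderiv : ∀ r ∈ Ioi (0 : ℝ), HasDerivAt ψ (ψ' r) r)
    (hψ_bdd : ∀ r ∈ Ioi (0 : ℝ), ‖ψ r‖ ≤ C) (hψ'_int : IntegrableOn ψ' (Ioi 0)) :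
    ∫ r in Ioi (0 : ℝ), exp (-(s * r)) * ψ' r
      = s * (∫ r in Ioi (0 : ℝ), exp (-(s * r)) * ψ r) - ψ 0 := by
  have hexp (r : ℝ) : HasDerivAt (fun r => exp (-(s * r))) (-s * exp (-(s * r))) r := by
    simpa [mul_comm] using ((hasDerivAt_id r).const_mul s).neg.exp
  have hexp_int : IntegrableOn (fun r => exp (-(s * r))) (Ioi 0) := by
    simpa only [neg_mul] using exp_neg_integrableOn_Ioi 0 hs
  have hexp_le : ∀ᵐ r ∂(volume.restrict (Ioi (0 : ℝ))), ‖exp (-(s * r))‖ ≤ 1 := by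
    filter_upwards [ae_restrict_mem measurableSet_Ioi] with r hr
    rw [norm_of_nonneg (exp_pos _).le, exp_le_one_iff, neg_nonpos]
    exact (mul_pos hs hr).le
  have hψ_meas : AEStronglyMeasurable ψ (volume.restrict (Ioi 0)) :=
    ContinuousOn.aestronglyMeasurable (fun r hr => (hderiv r hr).continuousAt.continuousWithinAt)
      measurableSet_Ioi
  have hint : IntegrableOn (fun r => exp (-(s * r)) * ψ r) (Ioi 0) :=
    (hexp_int.bdd_mul hψ_meas (ae_restrict_of_forall_mem measurableSet_Ioi hψ_bdd)).congr
      (ae_of_all _ fun r => mul_comm _ _)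
  have h_zero : Tendsto (fun r => exp (-(s * r)) * ψ r) (𝓝[>] 0) (𝓝 (ψ 0)) := by
    have hexp0 : Tendsto (fun r => exp (-(s * r))) (𝓝[>] 0) (𝓝 1) := by
      simpa using ((hexp 0).continuousAt.tendsto).mono_left nhdsWithin_le_nhds
    simpa using hexp0.mul (hψ0.mono Ioi_subset_Ici_self).tendsto
  have h_infty : Tendsto (fun r => exp (-(s * r)) * ψ r) atTop (𝓝 0) :=
    (tendsto_exp_neg_atTop_nhds_zero.comp (tendsto_id.const_mul_atTop hs)
      ).zero_mul_isBoundedUnder_le ⟨C, eventually_map.2 ((eventually_gt_atTop 0).mono hψ_bdd)⟩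
  rw [integral_Ioi_mul_deriv_eq_deriv_mul (fun r _ => hexp r) hderiv
    (hψ'_int.bdd_mul hexp_int.aestronglyMeasurable hexp_le)
    (by simp only [Pi.mul_def, mul_assoc]; exact hint.const_mul (-s)) h_zero h_infty]
  simp only [mul_assoc, integral_const_mul]
  ring

theorem hasDerivAt_const_mul_add_rpow_neg {a κ r : ℝ} (hr : 0 < a + r) :
    HasDerivAt (fun r => a ^ κ * (a + r) ^ (-κ)) (-(κ * a ^ κ / (a + r) ^ (κ + 1))) r := by
  have h := ((hasDerivAt_id' r).const_add a).rpow_const (p := -κ) (Or.inl hr.ne')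
  refine (h.const_mul (a ^ κ)).congr_deriv ?_
  rw [show -κ - 1 = -(κ + 1) by ring, rpow_neg hr.le]
  ring

theorem mul_integral_exp_neg_mul_const_mul_add_rpow_neg {a κ s : ℝ} (ha : 0 < a) (hs : 0 < s) :
    s * ∫ r in Ioi (0 : ℝ), exp (-(s * r)) * (a ^ κ * (a + r) ^ (-κ))
      = (a * s) ^ κ * ∫ u in Ioi (0 : ℝ), exp (-u) * (a * s + u) ^ (-κ) := by
  have hscale : ∀ r ∈ Ioi (0 : ℝ), exp (-(s * r)) * (a ^ κ * (a + r) ^ (-κ))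
      = (a * s) ^ κ * (exp (-(s * r)) * (a * s + s * r) ^ (-κ)) := by
    intro r hr
    rw [show a * s + s * r = s * (a + r) by ring, mul_rpow hs.le (by linarith [hr.out]),
      mul_rpow ha.le hs.le, rpow_neg hs.le]
    field_simp
  have hsubst := integral_comp_mul_left_Ioi (fun u => exp (-u) * (a * s + u) ^ (-κ)) 0 hs
  simp only [mul_zero, smul_eq_mul] at hsubst
  rw [setIntegral_congr_fun measurableSet_Ioi hscale, integral_const_mul, hsubst]
  field_simp

theorem one_sub_integral_exp_neg_mul_pareto {a κ s : ℝ} (ha : 0 < a) (hκ : 0 < κ) (hs : 0 < s) :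
    1 - ∫ r in Ioi (0 : ℝ), exp (-(s * r)) * (κ * a ^ κ / (a + r) ^ (κ + 1))
      = (a * s) ^ κ * ∫ u in Ioi (0 : ℝ), exp (-u) * (a * s + u) ^ (-κ) := by
  set ψ : ℝ → ℝ := fun r => a ^ κ * (a + r) ^ (-κ)
  have hderiv : ∀ r ∈ Ici (0 : ℝ), HasDerivAt ψ (-(κ * a ^ κ / (a + r) ^ (κ + 1))) r :=
    fun r hr => hasDerivAt_const_mul_add_rpow_neg (by linarith [hr.out])
  have hψ_bdd : ∀ r ∈ Ioi (0 : ℝ), ‖ψ r‖ ≤ 1 := by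
    intro r hr
    have hr' : 0 < a + r := by linarith [hr.out]
    rw [norm_of_nonneg (by positivity)]
    calc ψ r ≤ a ^ κ * a ^ (-κ) := mul_le_mul_of_nonneg_left
          (rpow_le_rpow_of_nonpos ha (by linarith [hr.out]) (by linarith)) (by positivity)
      _ = 1 := by rw [← rpow_add ha, add_neg_cancel, rpow_zero]
  have hψ_top : Tendsto ψ atTop (𝓝 0) := by
    simpa using ((tendsto_rpow_neg_atTop hκ).comp
      (tendsto_atTop_add_const_left _ a tendsto_id)).const_mul (a ^ κ)
  have hφ_nonneg : ∀ r ∈ Ioi (0 : ℝ), 0 ≤ κ * a ^ κ / (a + r) ^ (κ + 1) := fun r hr => by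
    have : 0 < a + r := by linarith [hr.out]
    positivity
  have hψ'_int := integrableOn_Ioi_deriv_of_nonpos' hderiv
    (fun r hr => neg_nonpos.2 (hφ_nonneg r hr)) hψ_top
  have hIBP := integral_exp_neg_mul_mul_deriv hs
    (hderiv 0 self_mem_Ici).continuousAt.continuousWithinAt
    (fun r hr => hderiv r (mem_Ici_of_Ioi hr)) hψ_bdd hψ'_int
  have hψ0 : ψ 0 = 1 := by simp [ψ, ← rpow_add ha]
  simp only [mul_neg, integral_neg, hψ0] at hIBP
  rw [← mul_integral_exp_neg_mul_const_mul_add_rpow_neg ha hs]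
  linarith

theorem tendsto_integral_exp_neg_mul_add_rpow_neg {κ : ℝ} (hκ : 0 ≤ κ) (hκ1 : κ < 1) :
    Tendsto (fun t => ∫ u in Ioi (0 : ℝ), exp (-u) * (t + u) ^ (-κ)) (𝓝[>] 0)
      (𝓝 (Gamma (1 - κ))) := by
  have hGamma : Gamma (1 - κ) = ∫ u in Ioi (0 : ℝ), exp (-u) * u ^ (-κ) := by
    rw [Gamma_eq_integral (by linarith), sub_sub_cancel_left]
  have hbound : IntegrableOn (fun u => exp (-u) * u ^ (-κ)) (Ioi 0) := by
    simpa using GammaIntegral_convergent (s := 1 - κ) (by linarith)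
  rw [hGamma]
  refine tendsto_integral_filter_of_dominated_convergence _ ?_ ?_ hbound ?_
  · exact Eventually.of_forall fun t => by fun_prop
  · filter_upwards [self_mem_nhdsWithin] with t (ht : 0 < t)
    filter_upwards [ae_restrict_mem measurableSet_Ioi] with u (hu : 0 < u)
    rw [norm_of_nonneg (by positivity)]
    exact mul_le_mul_of_nonneg_left (rpow_le_rpow_of_nonpos hu (by linarith) (by linarith))
      (exp_pos _).le
  · filter_upwards [ae_restrict_mem measurableSet_Ioi] with u (hu : 0 < u)
    have hcont : ContinuousAt (fun t => exp (-u) * (t + u) ^ (-κ)) 0 :=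
      continuousAt_const.mul ((continuousAt_id.add continuousAt_const).rpow_const
        (Or.inl (by simpa using hu.ne')))
    simpa using hcont.tendsto.mono_left nhdsWithin_le_nhds

theorem laplace_transform_small_lambda_expansion (κ a : ℝ) (hκ : 0 < κ) (hκ1 : κ < 1)
    (ha : 0 < a) (φ : ℝ → ℝ) (hφ : ∀ r, φ r = κ * a ^ κ / (a + r) ^ (κ + 1))
    (φhat : ℝ → ℝ) (hφhat : ∀ lam, φhat lam = ∫ r in Ioi (0:ℝ), Real.exp (-(lam * r)) * φ r) :
    Tendsto (fun lam : ℝ => (1 - φhat lam) / (a * lam) ^ κ)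
      (nhdsWithin 0 (Ioi 0)) (nhds (Real.Gamma (1 - κ))) := by
  have h_scale : Tendsto (a * ·) (𝓝[>] 0) (𝓝[>] 0) :=
    tendsto_iff_comap.2 (comap_mulLeft_nhdsGT_zero ha).ge
  refine ((tendsto_integral_exp_neg_mul_add_rpow_neg hκ.le hκ1).comp h_scale).congr' ?_
  filter_upwards [self_mem_nhdsWithin] with lam (hlam : 0 < lam)
  simp only [Function.comp_apply, hφhat, hφ, one_sub_integral_exp_neg_mul_pareto ha hκ hlam]
  rw [mul_div_cancel_left₀ _ (by positivity)]
end

section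
/- If ℓ : [0,2] → ℝ is a nonnegative continuous probability density on the sphere (∫_S ℓ(|θ-e₁|) dθ = 1), then each coordinate function φ₁ʲ(θ) = n θⱼ/|S| is an eigenfunction of T with eigenvalue ν₁ = ∫_S ℓ(|η - e₁|) η₁ dη, and |ν₁| < 1 provided ℓ is not concentrated at a point. -/
open MeasureTheory Metric

noncomputable def sphereMeasure (n : ℕ) :
    Measure (sphere (0 : EuclideanSpace ℝ (Fin n)) 1) :=
  (volume : Measure (EuclideanSpace ℝ (Fin n))).toSphere

/-!
The kernel `ℓ ‖θ - η‖` is invariant under linear isometries, and so is the surface measure;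
hence `(T⟪·, v⟫)(g η) = (T⟪·, g⁻¹ v⟫)(η)`. If `w ⟂ η`, the reflection in `w^⊥` fixes `η` and
negates `w`, so `(T⟪·, w⟫)(η) = 0`; the reflection exchanging `e₁` and `η` gives
`(T⟪·, η⟫)(η) = ν₁`. Splitting `v` along `η` and `η^⊥` yields `(T⟪·, v⟫)(η) = ν₁ ⟪η, v⟫`.

`ν₁` is the mean of `⟪θ, e₁⟫ ∈ [-1, 1]` against the probability density `ℓ ‖θ - e₁‖`, so
`|ν₁| = 1` forces `⟪θ, e₁⟫ = ±1`, i.e. `θ = ±e₁`, wherever the density does not vanish.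
-/

open scoped Pointwise RealInnerProductSpace

lemma ae_eq_one_of_one_le_integral_mul {α : Type*} [MeasurableSpace α] {μ : Measure α}
    {w g : α → ℝ} (hw0 : 0 ≤ᵐ[μ] w) (hg : ∀ᵐ x ∂μ, g x ≤ 1) (hw : Integrable w μ)
    (hwg : Integrable (fun x => w x * g x) μ) (hw1 : ∫ x, w x ∂μ = 1)
    (h : 1 ≤ ∫ x, w x * g x ∂μ) : ∀ᵐ x ∂μ, w x ≠ 0 → g x = 1 := by
  have hnonneg : 0 ≤ᵐ[μ] fun x => w x * (1 - g x) := by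
    filter_upwards [hw0, hg] with x hwx hgx using mul_nonneg hwx (sub_nonneg.mpr hgx)
  have hsplit : (fun x => w x * (1 - g x)) = fun x => w x - w x * g x := by
    ext x; ring
  have hzero : ∫ x, w x * (1 - g x) ∂μ = 0 := by
    refine le_antisymm ?_ (integral_nonneg_of_ae hnonneg)
    rw [hsplit, integral_sub hw hwg, hw1]
    linarith
  rw [integral_eq_zero_iff_of_nonneg_ae hnonneg (hsplit ▸ hw.sub hwg)] at hzero
  filter_upwards [hzero] with x hx hwx
  linarith [(mul_eq_zero.mp hx).resolve_left hwx]

section NormedSpace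

variable {E : Type*} [NormedAddCommGroup E]

lemma norm_coe_sub_mem_Icc (θ : sphere (0 : E) 1) {η : E} (hη : ‖η‖ ≤ 1) :
    ‖(θ : E) - η‖ ∈ Set.Icc 0 2 := by
  refine ⟨norm_nonneg _, ?_⟩
  calc ‖(θ : E) - η‖ ≤ ‖(θ : E)‖ + ‖η‖ := norm_sub_le _ _
    _ ≤ 1 + 1 := add_le_add (norm_eq_of_mem_sphere θ).le hη
    _ = 2 := one_add_one_eq_two

lemma continuous_zonalKernel {ℓ : ℝ → ℝ} (hℓ : ContinuousOn ℓ (Set.Icc 0 2)) {η : E}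
    (hη : ‖η‖ ≤ 1) : Continuous fun θ : sphere (0 : E) 1 => ℓ ‖(θ : E) - η‖ :=
  hℓ.comp_continuous (continuous_subtype_val.sub continuous_const).norm
    fun θ => norm_coe_sub_mem_Icc θ hη

variable [NormedSpace ℝ E]

noncomputable def sphereHomeomorph (g : E ≃ₗᵢ[ℝ] E) : sphere (0 : E) 1 ≃ₜ sphere (0 : E) 1 :=
  g.toHomeomorph.subtype fun x => by simp

@[simp]
lemma coe_sphereHomeomorph (g : E ≃ₗᵢ[ℝ] E) (θ : sphere (0 : E) 1) :
    (sphereHomeomorph g θ : E) = g θ :=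
  rfl

lemma measurePreserving_sphereHomeomorph [MeasurableSpace E] [BorelSpace E] {μ : Measure E}
    {g : E ≃ₗᵢ[ℝ] E} (hg : MeasurePreserving g μ μ) :
    MeasurePreserving (sphereHomeomorph g) μ.toSphere μ.toSphere := by
  have hmeas := (sphereHomeomorph g).continuous.measurable
  refine ⟨hmeas, Measure.ext fun s hs => ?_⟩
  have himage : ((↑) '' (sphereHomeomorph g ⁻¹' s) : Set E) = g ⁻¹' ((↑) '' s) := by
    ext x
    constructor
    · rintro ⟨θ, hθ, rfl⟩
      exact ⟨_, hθ, rfl⟩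
    · rintro ⟨θ, hθ, hx⟩
      refine ⟨(sphereHomeomorph g).symm θ, by simpa using hθ, ?_⟩
      change g.symm θ = x
      rw [hx, g.symm_apply_apply]
  have hsmul : Set.Ioo (0 : ℝ) 1 • g ⁻¹' ((↑) '' s) = g ⁻¹' (Set.Ioo (0 : ℝ) 1 • (↑) '' s) := by
    ext x
    simp only [Set.mem_smul, Set.mem_preimage]
    constructor
    · rintro ⟨c, hc, y, hy, rfl⟩
      exact ⟨c, hc, g y, hy, (g.map_smul c y).symm⟩
    · rintro ⟨c, hc, y, hy, hxy⟩
      exact ⟨c, hc, g.symm y, by simpa using hy,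
        g.injective (by rw [map_smul, g.apply_symm_apply, hxy])⟩
  rw [Measure.map_apply hmeas hs, Measure.toSphere_apply' _ (hmeas hs),
    Measure.toSphere_apply' _ hs, himage, hsmul,
    hg.measure_preimage_emb g.toHomeomorph.measurableEmbedding]

end NormedSpace

section ZonalMoment

variable {E : Type*} [NormedAddCommGroup E] [InnerProductSpace ℝ E] [MeasurableSpace E]
  {μ : Measure (sphere (0 : E) 1)} {ℓ : ℝ → ℝ}

/-- `zonalMoment ℓ μ η v` is `(T φ)(η)` for the linear function `φ = ⟪·, v⟫`. -/
noncomputable def zonalMoment (ℓ : ℝ → ℝ) (μ : Measure (sphere (0 : E) 1)) (η v : E) : ℝ :=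
  ∫ θ, ℓ ‖(θ : E) - η‖ * ⟪(θ : E), v⟫ ∂μ

lemma zonalMoment_smul (η v : E) (c : ℝ) :
    zonalMoment ℓ μ η (c • v) = c * zonalMoment ℓ μ η v := by
  simp only [zonalMoment, inner_smul_right, mul_left_comm _ c, integral_const_mul]

lemma zonalMoment_neg (η v : E) : zonalMoment ℓ μ η (-v) = -zonalMoment ℓ μ η v := by
  simpa using zonalMoment_smul (ℓ := ℓ) (μ := μ) η v (-1)

variable [BorelSpace E]

lemma zonalMoment_map
    (hμ : ∀ g : E ≃ₗᵢ[ℝ] E, MeasurePreserving (sphereHomeomorph g) μ μ)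
    (g : E ≃ₗᵢ[ℝ] E) (η v : E) : zonalMoment ℓ μ (g η) (g v) = zonalMoment ℓ μ η v := by
  rw [zonalMoment, ← (hμ g).integral_comp (sphereHomeomorph g).measurableEmbedding]
  simp only [coe_sphereHomeomorph, ← map_sub, LinearIsometryEquiv.norm_map,
    LinearIsometryEquiv.inner_map_map]
  rfl

lemma zonalMoment_eq_zero_of_inner_eq_zero
    (hμ : ∀ g : E ≃ₗᵢ[ℝ] E, MeasurePreserving (sphereHomeomorph g) μ μ)
    {η w : E} (hw : ⟪η, w⟫ = 0) : zonalMoment ℓ μ η w = 0 := by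
  let R := (ℝ ∙ w)ᗮ.reflection
  have hRη : R η = η :=
    Submodule.reflection_mem_subspace_eq_self
      (Submodule.mem_orthogonal_singleton_iff_inner_left.mpr hw)
  have hRw : R w = -w := Submodule.reflection_orthogonalComplement_singleton_eq_neg w
  have h := zonalMoment_map (ℓ := ℓ) hμ R η w
  rw [hRη, hRw, zonalMoment_neg] at h
  linarith

lemma zonalMoment_self_eq
    (hμ : ∀ g : E ≃ₗᵢ[ℝ] E, MeasurePreserving (sphereHomeomorph g) μ μ)
    {η e : E} (h : ‖e‖ = ‖η‖) : zonalMoment ℓ μ η η = zonalMoment ℓ μ e e := by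
  rw [← Submodule.reflection_sub h, zonalMoment_map hμ]

variable [FiniteDimensional ℝ E] [IsFiniteMeasure μ]

lemma integrable_zonalKernel_mul_inner (hℓ : ContinuousOn ℓ (Set.Icc 0 2)) {η : E}
    (hη : ‖η‖ ≤ 1) (v : E) :
    Integrable (fun θ : sphere (0 : E) 1 => ℓ ‖(θ : E) - η‖ * ⟪(θ : E), v⟫) μ :=
  ((continuous_zonalKernel hℓ hη).mul
    (continuous_subtype_val.inner continuous_const)).integrable_of_hasCompactSupport
    (HasCompactSupport.of_compactSpace _)

lemma zonalMoment_add (hℓ : ContinuousOn ℓ (Set.Icc 0 2)) {η : E} (hη : ‖η‖ ≤ 1) (v w : E) :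
    zonalMoment ℓ μ η (v + w) = zonalMoment ℓ μ η v + zonalMoment ℓ μ η w := by
  simp only [zonalMoment, inner_add_right, mul_add]
  exact integral_add (integrable_zonalKernel_mul_inner hℓ hη v)
    (integrable_zonalKernel_mul_inner hℓ hη w)

lemma zonalMoment_eq_mul_inner
    (hμ : ∀ g : E ≃ₗᵢ[ℝ] E, MeasurePreserving (sphereHomeomorph g) μ μ)
    (hℓ : ContinuousOn ℓ (Set.Icc 0 2)) {η e : E} (hη : ‖η‖ = 1) (he : ‖e‖ = 1) (v : E) :
    zonalMoment ℓ μ η v = zonalMoment ℓ μ e e * ⟪η, v⟫ := by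
  have horth : ⟪η, v - ⟪η, v⟫ • η⟫ = 0 := by
    rw [inner_sub_right, inner_smul_right, real_inner_self_eq_norm_sq, hη]
    ring
  calc zonalMoment ℓ μ η v = zonalMoment ℓ μ η (⟪η, v⟫ • η + (v - ⟪η, v⟫ • η)) := by
        rw [add_sub_cancel]
    _ = ⟪η, v⟫ * zonalMoment ℓ μ η η := by
        rw [zonalMoment_add hℓ hη.le, zonalMoment_smul,
          zonalMoment_eq_zero_of_inner_eq_zero hμ horth, add_zero]
    _ = zonalMoment ℓ μ e e * ⟪η, v⟫ := by
        rw [zonalMoment_self_eq hμ (he.trans hη.symm), mul_comm]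

lemma ae_eq_of_one_le_zonalMoment (hℓ : ContinuousOn ℓ (Set.Icc 0 2))
    (hℓ0 : ∀ s ∈ Set.Icc (0 : ℝ) 2, 0 ≤ ℓ s) {e u : E} (he : ‖e‖ = 1) (hu : ‖u‖ = 1)
    (hnorm : ∫ θ, ℓ ‖(θ : E) - e‖ ∂μ = 1) (h : 1 ≤ zonalMoment ℓ μ e u) :
    ∀ᵐ θ : sphere (0 : E) 1 ∂μ, ℓ ‖(θ : E) - e‖ ≠ 0 → (θ : E) = u := by
  have hinner_le : ∀ᵐ θ : sphere (0 : E) 1 ∂μ, ⟪(θ : E), u⟫ ≤ 1 :=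
    .of_forall fun θ => (real_inner_le_norm _ _).trans (by rw [norm_eq_of_mem_sphere θ, hu, one_mul])
  have hw := (continuous_zonalKernel hℓ he.le).integrable_of_hasCompactSupport
    (μ := μ) (HasCompactSupport.of_compactSpace _)
  filter_upwards [ae_eq_one_of_one_le_integral_mul
    (.of_forall fun θ => hℓ0 _ (norm_coe_sub_mem_Icc θ he.le)) hinner_le hw
    (integrable_zonalKernel_mul_inner hℓ he.le u) hnorm h] with θ hθ hne
  exact (inner_eq_one_iff_of_norm_eq_one (norm_eq_of_mem_sphere θ) hu).mp (hθ hne)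

lemma abs_zonalMoment_lt_one (hℓ : ContinuousOn ℓ (Set.Icc 0 2))
    (hℓ0 : ∀ s ∈ Set.Icc (0 : ℝ) 2, 0 ≤ ℓ s) {e : E} (he : ‖e‖ = 1)
    (hnorm : ∫ θ, ℓ ‖(θ : E) - e‖ ∂μ = 1)
    (hconc : ¬ ∃ p : sphere (0 : E) 1, ∀ᵐ θ : sphere (0 : E) 1 ∂μ, ℓ ‖(θ : E) - e‖ ≠ 0 → θ = p) :
    |zonalMoment ℓ μ e e| < 1 := by
  have hlt : ∀ u : E, ‖u‖ = 1 → zonalMoment ℓ μ e u < 1 := fun u hu => not_le.mp fun h =>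
    hconc ⟨⟨u, by simpa using hu⟩, by
      filter_upwards [ae_eq_of_one_le_zonalMoment hℓ hℓ0 he hu hnorm h] with θ hθ hne
      using Subtype.ext (hθ hne)⟩
  have hneg := hlt (-e) (by rwa [norm_neg])
  rw [zonalMoment_neg] at hneg
  exact abs_lt.mpr ⟨by linarith, hlt e he⟩

end ZonalMoment

instance (n : ℕ) : IsFiniteMeasure (sphereMeasure n) :=
  inferInstanceAs (IsFiniteMeasure (volume : Measure (EuclideanSpace ℝ (Fin n))).toSphere)

theorem coordinates_are_eigenfunctions_general (n : ℕ) (hn : 1 ≤ n)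
    (ℓ : ℝ → ℝ) (hℓ : ContinuousOn ℓ (Set.Icc 0 2)) (hℓ0 : ∀ s ∈ Set.Icc (0:ℝ) 2, 0 ≤ ℓ s)
    (e₁ : EuclideanSpace ℝ (Fin n)) (he₁ : e₁ = EuclideanSpace.single ⟨0, hn⟩ 1)
    (absS : ℝ)
    (hnorm : ∫ θ, ℓ ‖(θ : EuclideanSpace ℝ (Fin n)) - e₁‖ ∂(sphereMeasure n) = 1)
    (ν₁ : ℝ)
    (hν₁ : ν₁ = ∫ η, ℓ ‖(η : EuclideanSpace ℝ (Fin n)) - e₁‖ *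
        (η : EuclideanSpace ℝ (Fin n)) ⟨0, hn⟩ ∂(sphereMeasure n)) :
    (∀ j : Fin n, ∀ η : sphere (0 : EuclideanSpace ℝ (Fin n)) 1,
      (∫ θ, ℓ ‖(η : EuclideanSpace ℝ (Fin n)) - (θ : EuclideanSpace ℝ (Fin n))‖ *
          (n * (θ : EuclideanSpace ℝ (Fin n)) j / absS) ∂(sphereMeasure n)) =
        ν₁ * (n * (η : EuclideanSpace ℝ (Fin n)) j / absS)) ∧
    ((¬ ∃ p : sphere (0 : EuclideanSpace ℝ (Fin n)) 1,
        ∀ᵐ (θ : sphere (0 : EuclideanSpace ℝ (Fin n)) 1) ∂(sphereMeasure n),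
          ℓ ‖(θ : EuclideanSpace ℝ (Fin n)) - e₁‖ ≠ 0 → θ = p) →
      |ν₁| < 1) := by
  have hμ (g : EuclideanSpace ℝ (Fin n) ≃ₗᵢ[ℝ] EuclideanSpace ℝ (Fin n)) :
      MeasurePreserving (sphereHomeomorph g) (sphereMeasure n) (sphereMeasure n) :=
    measurePreserving_sphereHomeomorph g.measurePreserving
  have hcoord (x : EuclideanSpace ℝ (Fin n)) (j : Fin n) :
      x j = ⟪x, EuclideanSpace.single j 1⟫ := by
    simp [EuclideanSpace.inner_single_right]
  have he : ‖e₁‖ = 1 := by simp [he₁]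
  have hν : ν₁ = zonalMoment ℓ (sphereMeasure n) e₁ e₁ := by
    simp only [hν₁, zonalMoment, hcoord _ ⟨0, hn⟩, he₁]
  refine ⟨fun j η => ?_, fun hconc => hν ▸ abs_zonalMoment_lt_one hℓ hℓ0 he hnorm hconc⟩
  calc _ = n / absS * zonalMoment ℓ (sphereMeasure n) η (EuclideanSpace.single j 1) := by
        rw [zonalMoment, ← integral_const_mul]
        congr 1 with θ
        rw [norm_sub_rev, ← hcoord]
        ring
    _ = ν₁ * (n * (η : EuclideanSpace ℝ (Fin n)) j / absS) := by
        rw [zonalMoment_eq_mul_inner hμ hℓ (norm_eq_of_mem_sphere η) he, ← hν, ← hcoord]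
        ring

theorem coordinates_are_eigenfunctions (n : ℕ) (hn : 1 ≤ n)
    (ℓ : ℝ → ℝ) (hℓ : ContinuousOn ℓ (Set.Icc 0 2)) (hℓ0 : ∀ s ∈ Set.Icc (0:ℝ) 2, 0 ≤ ℓ s)
    (e₁ : EuclideanSpace ℝ (Fin n)) (he₁ : e₁ = EuclideanSpace.single ⟨0, hn⟩ 1)
    (absS : ℝ) (habsS : absS = ((sphereMeasure n) Set.univ).toReal)
    (hnorm : ∫ θ, ℓ ‖(θ : EuclideanSpace ℝ (Fin n)) - e₁‖ ∂(sphereMeasure n) = 1)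
    (ν₁ : ℝ)
    (hν₁ : ν₁ = ∫ η, ℓ ‖(η : EuclideanSpace ℝ (Fin n)) - e₁‖ *
        (η : EuclideanSpace ℝ (Fin n)) ⟨0, hn⟩ ∂(sphereMeasure n)) :
    (∀ j : Fin n, ∀ η : sphere (0 : EuclideanSpace ℝ (Fin n)) 1,
      (∫ θ, ℓ ‖(η : EuclideanSpace ℝ (Fin n)) - (θ : EuclideanSpace ℝ (Fin n))‖ *
          (n * (θ : EuclideanSpace ℝ (Fin n)) j / absS) ∂(sphereMeasure n)) =
        ν₁ * (n * (η : EuclideanSpace ℝ (Fin n)) j / absS)) ∧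
    ((¬ ∃ p : sphere (0 : EuclideanSpace ℝ (Fin n)) 1,
        ∀ᵐ (θ : sphere (0 : EuclideanSpace ℝ (Fin n)) 1) ∂(sphereMeasure n),
          ℓ ‖(θ : EuclideanSpace ℝ (Fin n)) - e₁‖ ≠ 0 → θ = p) →
      |ν₁| < 1) :=
  coordinates_are_eigenfunctions_general n hn ℓ hℓ hℓ0 e₁ he₁ absS hnorm ν₁ hν₁
end
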